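/- Let n ≥ 1 and let P be any n-qubit Pauli string different from the identity. Then the average over the random Hadamard layer satisfies (1/2) ∑_{t ∈ {0,1}} |⟨+|^⊗n (H^⊗n)^t · P · (H^⊗n)^t |+⟩^⊗n|² ≤ 1/2. (Core of Statement 1: a nonidentity Pauli error applied between the randomly activated initial and final Hadamard rounds of a trap circuit leaves the all-zero outcome with probability at most 1/2.) -/

import Mathlib

/-!
Sandwiching a Kronecker product `⊗ᵢ Aᵢ` between `⟨+|^⊗n` and `|+⟩^⊗n` gives `∏ᵢ ⟨+|Aᵢ|+⟩`, and
conjugation by `H^⊗n` preserves Kronecker form, so both amplitudes factor over the qubits into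
`⟨+|σ|+⟩` and `⟨+|HσH|+⟩ = ⟨0|σ|0⟩`, each of modulus at most 1. Since
`⟨0|X|0⟩ = ⟨+|Y|+⟩ = ⟨+|Z|+⟩ = 0`, a non-identity qubit kills one of the two amplitudes.
-/

open Matrix

/-- The four single-qubit Pauli matrices I, X, Y, Z. -/
noncomputable def pauli : Fin 4 → Matrix (Fin 2) (Fin 2) ℂ :=
  ![!![1, 0; 0, 1], !![0, 1; 1, 0], !![0, -Complex.I; Complex.I, 0], !![1, 0; 0, -1]]

/-- The `n`-qubit Pauli string `⊗ᵢ σ_{f i}`. -/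
noncomputable def PauliString (n : ℕ) (f : Fin n → Fin 4) :
    Matrix (Fin n → Fin 2) (Fin n → Fin 2) ℂ :=
  Matrix.of fun x y => ∏ i, pauli (f i) (x i) (y i)

/-- The Hadamard matrix `H = (1/√2)!![1,1;1,-1]`. -/
noncomputable def Hmat : Matrix (Fin 2) (Fin 2) ℂ :=
  (1 / ((Real.sqrt 2 : ℝ) : ℂ)) • !![1, 1; 1, -1]

/-- The `n`-fold Kronecker power `H^⊗n`. -/
noncomputable def HadN (n : ℕ) : Matrix (Fin n → Fin 2) (Fin n → Fin 2) ℂ :=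
  Matrix.of fun x y => ∏ i, Hmat (x i) (y i)

/-- The `n`-fold tensor power `|+⟩^⊗n`. -/
noncomputable def plusVec (n : ℕ) : (Fin n → Fin 2) → ℂ :=
  fun _ => (1 / ((Real.sqrt 2 : ℝ) : ℂ)) ^ n

/-- The matrix element `⟨+|^⊗n M |+⟩^⊗n`. -/
noncomputable def plusBraket (n : ℕ)
    (M : Matrix (Fin n → Fin 2) (Fin n → Fin 2) ℂ) : ℂ :=
  ∑ x, ∑ y, star (plusVec n x) * M x y * plusVec n y

namespace Matrix

variable {ι m R : Type*} [Fintype ι] [CommSemiring R]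

def piKron (A : ι → Matrix m m R) : Matrix (ι → m) (ι → m) R :=
  of fun x y => ∏ i, A i (x i) (y i)

theorem piKron_one [DecidableEq ι] [DecidableEq m] :
    piKron (fun _ : ι => (1 : Matrix m m R)) = 1 := by
  ext x y
  by_cases h : x = y
  · subst h
    simp [piKron]
  · obtain ⟨i, hi⟩ := Function.ne_iff.mp h
    simp only [piKron, of_apply, one_apply_ne h]
    exact Finset.prod_eq_zero (Finset.mem_univ i) (one_apply_ne hi)

theorem piKron_mul [DecidableEq ι] [Fintype m] (A B : ι → Matrix m m R) :
    piKron A * piKron B = piKron (A * B) := by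
  ext x y
  simp only [piKron, mul_apply, of_apply, Pi.mul_apply, Fintype.prod_sum, Finset.prod_mul_distrib]

theorem piKron_pow [DecidableEq ι] [Fintype m] [DecidableEq m] (A : ι → Matrix m m R) (k : ℕ) :
    piKron A ^ k = piKron (A ^ k) := by
  induction k with
  | zero => exact piKron_one.symm
  | succ k ih => rw [pow_succ, ih, piKron_mul, pow_succ]

theorem sum_sum_piKron_apply [DecidableEq ι] [Fintype m] (A : ι → Matrix m m R) :
    ∑ x, ∑ y, piKron A x y = ∏ i, ∑ a, ∑ b, A i a b := by
  simp only [piKron, of_apply, Fintype.prod_sum]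

end Matrix

/-- `⟨+|A|+⟩` for a single qubit. -/
noncomputable def plusAmp (A : Matrix (Fin 2) (Fin 2) ℂ) : ℂ := 2⁻¹ * ∑ a, ∑ b, A a b

theorem PauliString_eq_piKron (n : ℕ) (f : Fin n → Fin 4) :
    PauliString n f = piKron fun i => pauli (f i) := rfl

theorem HadN_eq_piKron (n : ℕ) : HadN n = piKron fun _ => Hmat := rfl

theorem ofReal_sqrt_two_mul_self : ((Real.sqrt 2 : ℝ) : ℂ) * ((Real.sqrt 2 : ℝ) : ℂ) = 2 := by
  rw [← Complex.ofReal_mul, Real.mul_self_sqrt zero_le_two, Complex.ofReal_ofNat]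

theorem plusBraket_eq_inv_two_pow_mul_sum (n : ℕ)
    (M : Matrix (Fin n → Fin 2) (Fin n → Fin 2) ℂ) :
    plusBraket n M = 2⁻¹ ^ n * ∑ x, ∑ y, M x y := by
  have hsq : star (1 / ((Real.sqrt 2 : ℝ) : ℂ)) * (1 / ((Real.sqrt 2 : ℝ) : ℂ)) = 2⁻¹ := by
    rw [one_div, star_inv₀, Complex.star_def, Complex.conj_ofReal, ← mul_inv,
      ofReal_sqrt_two_mul_self]
  simp only [plusBraket, plusVec, Finset.mul_sum, ← hsq, mul_pow, star_pow]
  refine Finset.sum_congr rfl fun x _ => Finset.sum_congr rfl fun y _ => by ring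

theorem plusBraket_piKron (n : ℕ) (A : Fin n → Matrix (Fin 2) (Fin 2) ℂ) :
    plusBraket n (piKron A) = ∏ i, plusAmp (A i) := by
  rw [plusBraket_eq_inv_two_pow_mul_sum, sum_sum_piKron_apply, ← Fin.prod_const,
    ← Finset.prod_mul_distrib]
  rfl

theorem plusAmp_hadamard_conj (A : Matrix (Fin 2) (Fin 2) ℂ) :
    plusAmp (Hmat * A * Hmat) = A 0 0 := by
  have hs : ((Real.sqrt 2 : ℝ) : ℂ) ^ 2 = 2 := by rw [sq, ofReal_sqrt_two_mul_self]
  have hne : ((Real.sqrt 2 : ℝ) : ℂ) ≠ 0 := by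
    intro h; rw [h] at hs; simp at hs
  simp only [plusAmp, Hmat, one_div, smul_of, smul_cons, smul_eq_mul, mul_one, smul_empty,
    mul_neg, cons_mul, Nat.succ_eq_add_one, Nat.reduceAdd, empty_mul, Equiv.symm_apply_apply,
    mul_apply, of_apply, cons_val', vecMul, dotProduct, Fin.sum_univ_two, Fin.isValue,
    cons_val_zero, cons_val_one, cons_val_fin_one, neg_mul]
  field_simp
  rw [hs]
  ring

theorem plusBraket_hadamard_pow_conj_pauliString (n : ℕ) (f : Fin n → Fin 4) (t : ℕ) :
    plusBraket n (HadN n ^ t * PauliString n f * HadN n ^ t) =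
      ∏ i, plusAmp (Hmat ^ t * pauli (f i) * Hmat ^ t) := by
  rw [HadN_eq_piKron, PauliString_eq_piKron, piKron_pow, piKron_mul, piKron_mul, plusBraket_piKron]
  rfl

theorem norm_plusAmp_hadamard_pow_conj_pauli_le_one (t : Fin 2) (k : Fin 4) :
    ‖plusAmp (Hmat ^ (t : ℕ) * pauli k * Hmat ^ (t : ℕ))‖ ≤ 1 := by
  match t with
  | 0 => fin_cases k <;> norm_num [plusAmp, pauli, Fin.sum_univ_two]
  | 1 =>
    rw [Fin.val_one, pow_one, plusAmp_hadamard_conj]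
    fin_cases k <;> simp [pauli]

theorem exists_plusAmp_hadamard_pow_conj_pauli_eq_zero {k : Fin 4} (hk : k ≠ 0) :
    ∃ t : Fin 2, plusAmp (Hmat ^ (t : ℕ) * pauli k * Hmat ^ (t : ℕ)) = 0 := by
  fin_cases k
  · exact absurd rfl hk
  · exact ⟨1, by simp [plusAmp_hadamard_conj, pauli]⟩
  all_goals exact ⟨0, by simp [plusAmp, pauli, Fin.sum_univ_two]⟩

theorem sum_sq_le_one_of_eq_zero {a : Fin 2 → ℝ} (h0 : ∀ t, 0 ≤ a t) (h1 : ∀ t, a t ≤ 1)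
    {s : Fin 2} (hs : a s = 0) : ∑ t, a t ^ 2 ≤ 1 := by
  rw [Fin.sum_univ_two]
  match s with
  | 0 => nlinarith [h0 1, h1 1]
  | 1 => nlinarith [h0 0, h1 0]

theorem hadamard_twirl_detection (n : ℕ)
    (f : Fin n → Fin 4) (hf : f ≠ fun _ => 0) :
    (1 / 2 : ℝ) * ∑ t : Fin 2,
        ‖plusBraket n
          (HadN n ^ (t : ℕ) * PauliString n f * HadN n ^ (t : ℕ))‖ ^ 2
      ≤ 1 / 2 := by
  simp only [plusBraket_hadamard_pow_conj_pauliString, norm_prod]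
  obtain ⟨i, hi⟩ := Function.ne_iff.mp hf
  obtain ⟨s, hs⟩ := exists_plusAmp_hadamard_pow_conj_pauli_eq_zero hi
  have hsum := sum_sq_le_one_of_eq_zero
    (a := fun t => ∏ j, ‖plusAmp (Hmat ^ (t : ℕ) * pauli (f j) * Hmat ^ (t : ℕ))‖)
    (fun t => Finset.prod_nonneg fun _ _ => norm_nonneg _)
    (fun t => Finset.prod_le_one (fun _ _ => norm_nonneg _)
      fun j _ => norm_plusAmp_hadamard_pow_conj_pauli_le_one t (f j))
    (Finset.prod_eq_zero (Finset.mem_univ i) (by rw [hs, norm_zero]))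
  linarith
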